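/- Let C > 0 be fixed. Then (2/(ℓ(ℓ+1))) · ∫_{C/ℓ}^{π/2} P_ℓ(cos θ) (P_ℓ'(cos θ))² sin θ dθ = O(1) as ℓ → ∞; that is, there exist K > 0 and ℓ₀ ∈ ℕ such that for all integers ℓ ≥ ℓ₀ the absolute value of this quantity is at most K. -/

import Mathlib

/-!
With `λ = ℓ(ℓ+1)`, Legendre's equation `(t² - 1) P'' + 2t P' = λ P` makes the energy
`λ P(cos θ)² + (P'(cos θ) sin θ)²` nonincreasing on `[0, π/2]`, so `|P'(cos θ) sin θ| ≤ √λ` there.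
The same equation gives
`λ P(cos θ) P'(cos θ)² sin θ = d/dθ (P'(cos θ)³ sin² θ / 3) + (4/3) sin θ cos θ P'(cos θ)³`,
and both the boundary term and the last integral over `[C/ℓ, π/2]` are `O(√λ³ / sin (C/ℓ))`.
Since `sin (C/ℓ) ≥ 2C/(πℓ)`, dividing by `λ²/2` leaves a bounded quantity.
-/

open Real intervalIntegral

/-- The `n`-th Legendre polynomial via Rodrigues' formula:
`P_n(t) = (1/(2^n n!)) dⁿ/dtⁿ (t² − 1)ⁿ`. -/
noncomputable def legendreP (n : ℕ) (t : ℝ) : ℝ :=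
  (1 / ((2 : ℝ) ^ n * (n.factorial : ℝ))) *
    iteratedDeriv n (fun s : ℝ => (s ^ 2 - 1) ^ n) t

open Polynomial Set

section Rodrigues

variable {R : Type*} [CommRing R]

theorem derivative_X_sq_sub_one : derivative (X ^ 2 - 1 : R[X]) = 2 * X := by
  rw [derivative_sub, derivative_X_sq, derivative_one, sub_zero, C_ofNat]

theorem sq_sub_one_mul_derivative_pow (n : ℕ) :
    (X ^ 2 - 1) * derivative ((X ^ 2 - 1) ^ n : R[X])
      = 2 * (n : R[X]) * X * (X ^ 2 - 1) ^ n := by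
  rcases n with _ | n
  · simp
  · rw [derivative_pow, derivative_X_sq_sub_one, map_natCast]
    push_cast
    ring

-- The identity `(X² - 1) u' = 2n X u` for `u = (X² - 1)ⁿ`, differentiated `k + 1` times
-- by Leibniz' rule; at `k = n` it becomes Legendre's equation for `u⁽ⁿ⁾`.
theorem sq_sub_one_mul_iterate_derivative_pow (n k : ℕ) :
    (X ^ 2 - 1) * derivative^[k + 2] ((X ^ 2 - 1) ^ n : R[X])
      + 2 * ((k : R[X]) + 1) * X * derivative^[k + 1] ((X ^ 2 - 1) ^ n)
      + ((k : R[X]) + 1) * (k : R[X]) * derivative^[k] ((X ^ 2 - 1) ^ n)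
      = 2 * (n : R[X]) * X * derivative^[k + 1] ((X ^ 2 - 1) ^ n)
        + 2 * (n : R[X]) * ((k : R[X]) + 1) * derivative^[k] ((X ^ 2 - 1) ^ n) := by
  induction k with
  | zero =>
    have h := congrArg derivative (sq_sub_one_mul_derivative_pow (R := R) n)
    simp only [derivative_mul, derivative_X_sq_sub_one, derivative_X, derivative_ofNat,
      derivative_natCast] at h
    simp only [Function.iterate_succ_apply', Function.iterate_zero_apply]
    push_cast at h ⊢
    linear_combination h
  | succ k ih =>
    have h := congrArg derivative ih
    simp only [derivative_mul, derivative_add, derivative_X_sq_sub_one, derivative_one,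
      derivative_X, derivative_ofNat, derivative_natCast] at h
    simp only [Function.iterate_succ_apply'] at h ⊢
    push_cast at h ⊢
    linear_combination h

theorem eval_iterate_derivative_X_sub_C_pow_mul (n : ℕ) (c : R) (q : R[X]) :
    (derivative^[n] ((X - C c) ^ n * q)).eval c = n.factorial * q.eval c := by
  rw [iterate_derivative_mul, eval_finsetSum,
    Finset.sum_eq_single_of_mem 0 (Finset.mem_range.mpr n.succ_pos)]
  · simp [iterate_derivative_X_sub_pow_self]
  · intro k hk hk0
    rw [iterate_derivative_X_sub_pow, Nat.sub_sub_self (Finset.mem_range_succ_iff.mp hk)]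
    simp [zero_pow hk0]

end Rodrigues

def LegendreEquation (p : ℝ[X]) (μ : ℝ) : Prop :=
  (X ^ 2 - 1) * derivative (derivative p) + 2 * X * derivative p = C μ * p

theorem LegendreEquation.eval_cos {p : ℝ[X]} {μ : ℝ} (hp : LegendreEquation p μ) (θ : ℝ) :
    μ * p.eval (cos θ)
      = 2 * cos θ * (derivative p).eval (cos θ)
        - sin θ ^ 2 * (derivative (derivative p)).eval (cos θ) := by
  have h := congrArg (Polynomial.eval (cos θ)) hp
  simp only [eval_add, eval_mul, eval_sub, eval_pow, eval_X, eval_one, eval_C, eval_ofNat] at h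
  linear_combination -h + (derivative (derivative p)).eval (cos θ) * sin_sq_add_cos_sq θ

noncomputable def legendrePoly (n : ℕ) : ℝ[X] :=
  C (1 / ((2 : ℝ) ^ n * n.factorial)) * derivative^[n] ((X ^ 2 - 1) ^ n)

theorem legendreEquation_legendrePoly (n : ℕ) :
    LegendreEquation (legendrePoly n) (n * (n + 1)) := by
  rw [LegendreEquation]
  have h := sq_sub_one_mul_iterate_derivative_pow (R := ℝ) n n
  simp only [legendrePoly, derivative_C_mul, map_mul, map_add, map_natCast, map_one]
  simp only [Function.iterate_succ_apply'] at h
  linear_combination C (1 / ((2 : ℝ) ^ n * n.factorial)) * h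

theorem eval_one_legendrePoly (n : ℕ) : (legendrePoly n).eval 1 = 1 := by
  have h : ((X ^ 2 - 1) ^ n : ℝ[X]) = (X - C 1) ^ n * (X + 1) ^ n := by
    rw [← mul_pow, C_1]; ring
  rw [legendrePoly, eval_mul, eval_C, h, eval_iterate_derivative_X_sub_C_pow_mul]
  simp only [eval_pow, eval_add, eval_X, eval_one]
  field_simp
  norm_num

theorem iteratedDeriv_eval {𝕜 : Type*} [NontriviallyNormedField 𝕜] (p : 𝕜[X]) (k : ℕ) :
    iteratedDeriv k (fun x => p.eval x) = fun x => (derivative^[k] p).eval x := by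
  induction k with
  | zero => simp
  | succ k ih =>
    rw [iteratedDeriv_succ, ih, Function.iterate_succ_apply']
    exact funext fun x => Polynomial.deriv _

theorem legendreP_eq_eval (n : ℕ) (t : ℝ) : legendreP n t = (legendrePoly n).eval t := by
  have h := iteratedDeriv_eval (((X : ℝ[X]) ^ 2 - 1) ^ n) n
  simp only [eval_pow, eval_sub, eval_X, eval_one] at h
  simp [legendreP, legendrePoly, h]

theorem deriv_legendreP (n : ℕ) (t : ℝ) :
    deriv (legendreP n) t = (derivative (legendrePoly n)).eval t := by
  rw [funext (legendreP_eq_eval n)]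
  exact Polynomial.deriv _

theorem hasDerivAt_eval_cos (p : ℝ[X]) (θ : ℝ) :
    HasDerivAt (fun θ => p.eval (cos θ)) ((derivative p).eval (cos θ) * -sin θ) θ :=
  (p.hasDerivAt _).comp θ (hasDerivAt_cos θ)

theorem continuousOn_cos_div_sin_sq : ContinuousOn (fun θ => cos θ / sin θ ^ 2) (Ioo 0 π) :=
  continuousOn_cos.div (continuousOn_sin.pow 2) fun _ hθ =>
    (pow_pos (sin_pos_of_mem_Ioo hθ) 2).ne'

theorem integral_cos_div_sin_sq {a b : ℝ} (ha : a ∈ Ioo 0 π) (hb : b ∈ Ioo 0 π) :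
    ∫ θ in a..b, cos θ / sin θ ^ 2 = 1 / sin a - 1 / sin b := by
  have hsin : ∀ θ ∈ uIcc a b, sin θ ≠ 0 := fun θ hθ =>
    (sin_pos_of_mem_Ioo (ordConnected_Ioo.uIcc_subset ha hb hθ)).ne'
  rw [integral_eq_sub_of_hasDerivAt (f := fun θ => -(sin θ)⁻¹)
    (f' := fun θ => cos θ / sin θ ^ 2)
    (fun θ hθ => ((hasDerivAt_sin θ).inv (hsin θ hθ)).neg.congr_deriv (by ring))
    (continuousOn_cos_div_sin_sq.mono (ordConnected_Ioo.uIcc_subset ha hb)).intervalIntegrable]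
  ring

theorem abs_pow_three_mul_sin_sq_le {x θ M : ℝ} (hθ : 0 < sin θ) (hM : |x * sin θ| ≤ M) :
    |x ^ 3 * sin θ ^ 2| ≤ M ^ 3 / sin θ := by
  rw [le_div_iff₀ hθ]
  calc |x ^ 3 * sin θ ^ 2| * sin θ = |x * sin θ| ^ 3 := by
        rw [abs_mul, abs_mul, abs_pow, abs_pow, abs_of_pos hθ]; ring
    _ ≤ M ^ 3 := pow_le_pow_left₀ (abs_nonneg _) hM 3

theorem abs_integral_sin_mul_cos_mul_pow_three_le {q : ℝ → ℝ} {a M : ℝ} (ha : 0 < a)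
    (haπ : a ≤ π / 2) (hM : ∀ θ ∈ Icc a (π / 2), |q θ * sin θ| ≤ M) :
    |∫ θ in a..π / 2, sin θ * cos θ * q θ ^ 3| ≤ M ^ 3 * (1 / sin a - 1) := by
  have hIoo : ∀ θ ∈ Icc a (π / 2), θ ∈ Ioo 0 π := fun θ hθ =>
    ⟨ha.trans_le hθ.1, hθ.2.trans_lt (by linarith [pi_pos])⟩
  have hpoint : ∀ θ ∈ Ioc a (π / 2),
      ‖sin θ * cos θ * q θ ^ 3‖ ≤ M ^ 3 * (cos θ / sin θ ^ 2) := by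
    intro θ hθ
    have hs := sin_pos_of_mem_Ioo (hIoo θ (Ioc_subset_Icc_self hθ))
    have hc : 0 ≤ cos θ := cos_nonneg_of_mem_Icc ⟨by linarith [hθ.1, pi_pos], hθ.2⟩
    have h3 := abs_pow_three_mul_sin_sq_le hs (hM θ (Ioc_subset_Icc_self hθ))
    calc ‖sin θ * cos θ * q θ ^ 3‖ = cos θ / sin θ * |q θ ^ 3 * sin θ ^ 2| := by
          rw [norm_eq_abs, abs_mul, abs_mul, abs_mul, abs_of_pos hs, abs_of_nonneg hc,
            abs_of_pos (pow_pos hs 2)]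
          field_simp
      _ ≤ cos θ / sin θ * (M ^ 3 / sin θ) := by gcongr
      _ = M ^ 3 * (cos θ / sin θ ^ 2) := by field_simp
  have hint : IntervalIntegrable (fun θ => M ^ 3 * (cos θ / sin θ ^ 2))
      MeasureTheory.volume a (π / 2) :=
    (continuousOn_const.mul (continuousOn_cos_div_sin_sq.mono
      fun θ hθ => hIoo θ (uIcc_of_le haπ ▸ hθ))).intervalIntegrable
  calc |∫ θ in a..π / 2, sin θ * cos θ * q θ ^ 3|
      ≤ ∫ θ in a..π / 2, M ^ 3 * (cos θ / sin θ ^ 2) :=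
        norm_integral_le_of_norm_le haπ (MeasureTheory.ae_of_all _ hpoint) hint
    _ = M ^ 3 * (1 / sin a - 1) := by
      rw [integral_const_mul, integral_cos_div_sin_sq (hIoo a ⟨le_rfl, haπ⟩)
        (hIoo _ ⟨haπ, le_rfl⟩), sin_pi_div_two, div_one]

section

variable {p : ℝ[X]} {μ : ℝ}

theorem hasDerivAt_legendre_energy (hp : LegendreEquation p μ) (θ : ℝ) :
    HasDerivAt (fun θ => μ * p.eval (cos θ) ^ 2 + ((derivative p).eval (cos θ) * sin θ) ^ 2)
      (-(2 * cos θ * sin θ * (derivative p).eval (cos θ) ^ 2)) θ := by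
  have h := (((hasDerivAt_eval_cos p θ).fun_pow 2).const_mul μ).add
    (((hasDerivAt_eval_cos (derivative p) θ).fun_mul (hasDerivAt_sin θ)).fun_pow 2)
  refine h.congr_deriv ?_
  push_cast
  linear_combination -2 * sin θ * (derivative p).eval (cos θ) * hp.eval_cos θ

theorem sq_eval_derivative_cos_mul_sin_le (hp : LegendreEquation p μ) (hμ : 0 ≤ μ) {θ : ℝ}
    (hθ : θ ∈ Icc 0 (π / 2)) :
    ((derivative p).eval (cos θ) * sin θ) ^ 2 ≤ μ * p.eval 1 ^ 2 := by
  have hanti : AntitoneOn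
      (fun θ => μ * p.eval (cos θ) ^ 2 + ((derivative p).eval (cos θ) * sin θ) ^ 2)
      (Icc 0 (π / 2)) := by
    refine antitoneOn_of_hasDerivWithinAt_nonpos (convex_Icc 0 (π / 2))
      (fun θ _ => (hasDerivAt_legendre_energy hp θ).continuousAt.continuousWithinAt)
      (fun θ _ => (hasDerivAt_legendre_energy hp θ).hasDerivWithinAt) fun θ hθ => ?_
    rw [interior_Icc] at hθ
    have hcos : 0 ≤ cos θ := cos_nonneg_of_mem_Icc ⟨by linarith [hθ.1, pi_pos], hθ.2.le⟩
    have hsin : 0 ≤ sin θ := sin_nonneg_of_nonneg_of_le_pi hθ.1.le (by linarith [hθ.2, pi_pos])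
    have := mul_nonneg (mul_nonneg hcos hsin) (sq_nonneg ((derivative p).eval (cos θ)))
    linarith
  have h := hanti (left_mem_Icc.2 (by positivity)) hθ hθ.1
  simp only [cos_zero, sin_zero, mul_zero] at h
  nlinarith [mul_nonneg hμ (sq_nonneg (p.eval (cos θ)))]

theorem mul_integral_eval_cos_mul_sq_eq (hp : LegendreEquation p μ) (a b : ℝ) :
    μ * ∫ θ in a..b, p.eval (cos θ) * (derivative p).eval (cos θ) ^ 2 * sin θ
      = ((derivative p).eval (cos b) ^ 3 * sin b ^ 2
          - (derivative p).eval (cos a) ^ 3 * sin a ^ 2) / 3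
        + 4 / 3 * ∫ θ in a..b, sin θ * cos θ * (derivative p).eval (cos θ) ^ 3 := by
  have hderiv : ∀ θ, HasDerivAt (fun θ => (derivative p).eval (cos θ) ^ 3 * sin θ ^ 2 / 3)
      (μ * (p.eval (cos θ) * (derivative p).eval (cos θ) ^ 2 * sin θ)
        - 4 / 3 * (sin θ * cos θ * (derivative p).eval (cos θ) ^ 3)) θ := fun θ => by
    refine ((((hasDerivAt_eval_cos (derivative p) θ).fun_pow 3).fun_mul
      ((hasDerivAt_sin θ).fun_pow 2)).div_const 3).congr_deriv ?_
    push_cast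
    linear_combination -sin θ * (derivative p).eval (cos θ) ^ 2 * hp.eval_cos θ
  have hftc := integral_eq_sub_of_hasDerivAt (fun θ _ => hderiv θ)
    (Continuous.intervalIntegrable (by fun_prop) a b)
  rw [integral_sub, integral_const_mul, integral_const_mul] at hftc
  · linear_combination hftc
  all_goals exact Continuous.intervalIntegrable (by fun_prop) a b

theorem abs_mul_integral_eval_cos_mul_sq_le (hp : LegendreEquation p μ) {a M : ℝ} (ha : 0 < a)
    (haπ : a ≤ π / 2)
    (hM : ∀ θ ∈ Icc a (π / 2), |(derivative p).eval (cos θ) * sin θ| ≤ M) :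
    |μ * ∫ θ in a..π / 2, p.eval (cos θ) * (derivative p).eval (cos θ) ^ 2 * sin θ|
      ≤ 5 * M ^ 3 / (3 * sin a) := by
  have hsa : 0 < sin a := sin_pos_of_pos_of_lt_pi ha (by linarith [pi_pos])
  have hend : |(derivative p).eval (cos (π / 2)) ^ 3| ≤ M ^ 3 := by
    simpa using abs_pow_three_mul_sin_sq_le (by simp) (hM _ ⟨haπ, le_rfl⟩)
  have hstart := abs_pow_three_mul_sin_sq_le hsa (hM a ⟨le_rfl, haπ⟩)
  have hbulk := abs_integral_sin_mul_cos_mul_pow_three_le ha haπ hM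
  have hM0 : 0 ≤ M := (abs_nonneg _).trans (hM a ⟨le_rfl, haπ⟩)
  rw [mul_integral_eval_cos_mul_sq_eq hp, sin_pi_div_two, one_pow, mul_one]
  set e := (derivative p).eval (cos (π / 2)) ^ 3
  set s := (derivative p).eval (cos a) ^ 3 * sin a ^ 2
  set I := ∫ θ in a..π / 2, sin θ * cos θ * (derivative p).eval (cos θ) ^ 3
  calc |(e - s) / 3 + 4 / 3 * I| ≤ (|e| + |s|) / 3 + 4 / 3 * |I| :=
        abs_le.mpr ⟨by linarith [neg_abs_le e, le_abs_self s, neg_abs_le I],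
          by linarith [le_abs_self e, neg_abs_le s, le_abs_self I]⟩
    _ ≤ (M ^ 3 + M ^ 3 / sin a) / 3 + 4 / 3 * (M ^ 3 * (1 / sin a - 1)) := by gcongr
    _ ≤ 5 * M ^ 3 / (3 * sin a) := by
        field_simp
        nlinarith [pow_nonneg hM0 3]

end

theorem abs_integral_legendreP_le {n : ℕ} (hn : 0 < n) {a : ℝ} (ha : 0 < a)
    (haπ : a ≤ π / 2) :
    |∫ θ in a..π / 2, legendreP n (cos θ) * deriv (legendreP n) (cos θ) ^ 2 * sin θ|
      ≤ 5 * √(n * (n + 1)) / (3 * sin a) := by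
  have hμ : (0 : ℝ) < n * (n + 1) := by positivity
  have hM : ∀ θ ∈ Icc a (π / 2),
      |(derivative (legendrePoly n)).eval (cos θ) * sin θ| ≤ √(n * (n + 1)) := fun θ hθ =>
    abs_le_sqrt <| by
      simpa [eval_one_legendrePoly] using sq_eval_derivative_cos_mul_sin_le
        (legendreEquation_legendrePoly n) hμ.le ⟨ha.le.trans hθ.1, hθ.2⟩
  have h := abs_mul_integral_eval_cos_mul_sq_le (legendreEquation_legendrePoly n) ha haπ hM
  rw [abs_mul, abs_of_pos hμ, pow_succ, sq_sqrt hμ.le] at h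
  simp only [legendreP_eq_eval, deriv_legendreP]
  refine le_of_mul_le_mul_left (h.trans_eq ?_) hμ
  ring

theorem legendre_deriv_sq_norm_integral_bounded (C : ℝ) (hC : 0 < C) :
    ∃ K > 0, ∃ ℓ₀ : ℕ, ∀ ℓ : ℕ, ℓ₀ ≤ ℓ →
      |(2 / ((ℓ : ℝ) * ((ℓ : ℝ) + 1))) *
        ∫ θ in (C / (ℓ : ℝ))..(π / 2),
          legendreP ℓ (Real.cos θ) * (deriv (legendreP ℓ) (Real.cos θ)) ^ 2 *
            Real.sin θ| ≤ K := by
  refine ⟨5 * π / (3 * C), by positivity, ⌈C⌉₊ + 1, fun ℓ hℓ => ?_⟩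
  have hCℓ : C < ℓ := (Nat.le_ceil C).trans_lt (by exact_mod_cast hℓ)
  have hℓ0 : (0 : ℝ) < ℓ := hC.trans hCℓ
  have ha : 0 < C / ℓ := div_pos hC hℓ0
  have haπ : C / ℓ ≤ π / 2 := by
    rw [div_le_iff₀ hℓ0]; nlinarith [pi_gt_three]
  have hsin := mul_le_sin ha.le haπ
  have hsqrt : (ℓ : ℝ) ≤ √(ℓ * (ℓ + 1)) := le_sqrt_of_sq_le (by nlinarith)
  have hI := abs_integral_legendreP_le (by exact_mod_cast hℓ0) ha haπ
  rw [abs_mul, abs_of_pos (by positivity)]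
  calc 2 / (ℓ * (ℓ + 1)) * |_|
      ≤ 2 / (ℓ * (ℓ + 1)) * (5 * √(ℓ * (ℓ + 1)) / (3 * sin (C / ℓ))) := by gcongr
    _ = 10 / (3 * (√(ℓ * (ℓ + 1)) * sin (C / ℓ))) := by
        have hsa : 0 < sin (C / ℓ) := sin_pos_of_pos_of_lt_pi ha (by linarith [pi_pos])
        have hr := sq_sqrt (by positivity : (0 : ℝ) ≤ ℓ * (ℓ + 1))
        have hr0 : 0 < √(ℓ * (ℓ + 1) : ℝ) := by positivity
        field_simp
        linear_combination 10 * hr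
    _ ≤ 10 / (3 * (ℓ * (2 / π * (C / ℓ)))) := by gcongr
    _ = 5 * π / (3 * C) := by field_simp; ring
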